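/- arXiv:2403.09794 — 9 statements merged into one kernel-verified Lean document; each statement's English description precedes it below -/
import Mathlib

section
/- Define the sequence α_0 = 0 and α_{t+1} = α_t + (1/2)(√(4α_t² − 8α_t + 5) − 1). Then for every t ≥ 0, 0 ≤ α_t < α_{t+1} < 1. -/
noncomputable def alphaSeq : ℕ → ℝ
  | 0 => 0
  | t + 1 => alphaSeq t + (1/2) * (Real.sqrt (4 * (alphaSeq t)^2 - 8 * alphaSeq t + 5) - 1)

lemma alphaSeq_step (x : ℝ) (h0 : 0 ≤ x) (h1 : x < 1) :
    x < x + (1/2) * (Real.sqrt (4 * x^2 - 8 * x + 5) - 1) ∧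
    x + (1/2) * (Real.sqrt (4 * x^2 - 8 * x + 5) - 1) < 1 := by
  have he : (1:ℝ) < 4 * x^2 - 8 * x + 5 := by nlinarith [sq_nonneg (x - 1)]
  have hlo : 1 < Real.sqrt (4 * x^2 - 8 * x + 5) := by
    have := Real.lt_sqrt (x := 1) (y := 4 * x^2 - 8 * x + 5) (by norm_num)
    rw [this]; nlinarith
  have hhi : Real.sqrt (4 * x^2 - 8 * x + 5) < 3 - 2 * x := by
    rw [show (3 - 2*x) = Real.sqrt ((3 - 2*x)^2) from
      (Real.sqrt_sq (by linarith)).symm]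
    apply Real.sqrt_lt_sqrt (by nlinarith) (by nlinarith)
  constructor <;> nlinarith

lemma alphaSeq_inv : ∀ t, 0 ≤ alphaSeq t ∧ alphaSeq t < 1 := by
  intro t
  induction t with
  | zero => simp [alphaSeq]
  | succ n ih =>
    obtain ⟨h0, h1⟩ := ih
    obtain ⟨ha, hb⟩ := alphaSeq_step _ h0 h1
    exact ⟨le_of_lt (lt_of_le_of_lt h0 (by simpa [alphaSeq] using ha)),
      by simpa [alphaSeq] using hb⟩

theorem alphaSeq_monotone_bounded :
    ∀ t : ℕ, 0 ≤ alphaSeq t ∧ alphaSeq t < alphaSeq (t + 1) ∧ alphaSeq (t + 1) < 1 := by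
  intro t
  obtain ⟨h0, h1⟩ := alphaSeq_inv t
  obtain ⟨ha, hb⟩ := alphaSeq_step _ h0 h1
  exact ⟨h0, by simpa [alphaSeq] using ha, by simpa [alphaSeq] using hb⟩
end

section
/- Define α_0 = 0, α_{t+1} = α_t + (1/2)(√(4α_t² − 8α_t + 5) − 1), and f_t = 1/(1 − α_t). Then the sequence of differences f_{t+1} − f_t is strictly decreasing in t. -/
noncomputable def fseq (t : ℕ) : ℝ := 1 / (1 - alphaSeq t)

lemma sqrt_gt_one {b : ℝ} (hb : 0 < b) : 1 < Real.sqrt (4*b^2+1) := by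
  rw [show (4*b^2+1 : ℝ) = (4*b^2+1) by ring, Real.lt_sqrt (by norm_num)]
  nlinarith

lemma sqrt_lt {b : ℝ} (hb : 0 < b) : Real.sqrt (4*b^2+1) < 2*b+1 := by
  rw [show (2*b+1) = Real.sqrt ((2*b+1)^2) from (Real.sqrt_sq (by linarith)).symm]
  exact Real.sqrt_lt_sqrt (by positivity) (by nlinarith)

lemma alpha_lt_one : ∀ t, alphaSeq t < 1 := by
  intro t
  induction t with
  | zero => norm_num [alphaSeq]
  | succ t ih =>
    have hb : 0 < 1 - alphaSeq t := by linarith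
    have hsq : Real.sqrt (4 * (alphaSeq t)^2 - 8 * alphaSeq t + 5)
        = Real.sqrt (4*(1-alphaSeq t)^2+1) := by congr 1; ring
    have h2 := sqrt_lt hb
    show alphaSeq t + (1/2) * (Real.sqrt (4 * (alphaSeq t)^2 - 8 * alphaSeq t + 5) - 1) < 1
    rw [hsq]; linarith

lemma alpha_lt_succ (t : ℕ) : alphaSeq t < alphaSeq (t+1) := by
  have hb : 0 < 1 - alphaSeq t := by linarith [alpha_lt_one t]
  have hsq : Real.sqrt (4 * (alphaSeq t)^2 - 8 * alphaSeq t + 5)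
      = Real.sqrt (4*(1-alphaSeq t)^2+1) := by congr 1; ring
  have h1 := sqrt_gt_one hb
  show alphaSeq t < alphaSeq t + (1/2) * (Real.sqrt (4 * (alphaSeq t)^2 - 8 * alphaSeq t + 5) - 1)
  rw [hsq]; linarith

lemma diff_eq (t : ℕ) :
    fseq (t+1) - fseq t
      = 1 + 2*(1-alphaSeq t)/(1 + Real.sqrt (4*(1-alphaSeq t)^2+1)) := by
  set b := 1 - alphaSeq t with hbdef
  have hb : 0 < b := by have := alpha_lt_one t; simp [hbdef]; linarith
  set s := Real.sqrt (4*b^2+1) with hsdef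
  have hs2 : s^2 = 4*b^2+1 := Real.sq_sqrt (by positivity)
  have hs1 : 1 < s := sqrt_gt_one hb
  have hslt : s < 2*b+1 := sqrt_lt hb
  have hβ' : 1 - alphaSeq (t+1) = (2*b+1-s)/2 := by
    show 1 - (alphaSeq t + (1/2) * (Real.sqrt (4 * (alphaSeq t)^2 - 8 * alphaSeq t + 5) - 1)) = _
    rw [show (4 * (alphaSeq t)^2 - 8 * alphaSeq t + 5) = 4*b^2+1 by rw [hbdef]; ring, ← hsdef,
      hbdef]
    ring
  unfold fseq
  rw [hβ', ← hbdef]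
  have h1 : (2*b+1-s) ≠ 0 := by linarith
  have h2 : (1+s) ≠ 0 := by linarith
  field_simp
  nlinarith [hs2, sq_nonneg s, sq_nonneg b]

lemma D_mono {a b : ℝ} (hb : 0 < b) (hba : b < a) :
    2*b/(1+Real.sqrt (4*b^2+1)) < 2*a/(1+Real.sqrt (4*a^2+1)) := by
  have ha : 0 < a := hb.trans hba
  set sa := Real.sqrt (4*a^2+1) with hsa
  set sb := Real.sqrt (4*b^2+1) with hsb
  have hsa0 : 0 ≤ sa := Real.sqrt_nonneg _
  have hsb0 : 0 ≤ sb := Real.sqrt_nonneg _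
  have hsa2 : sa^2 = 4*a^2+1 := Real.sq_sqrt (by positivity)
  have hsb2 : sb^2 = 4*b^2+1 := Real.sq_sqrt (by positivity)
  rw [div_lt_div_iff₀ (by positivity) (by positivity)]
  have key : b * sa < a * sb := by
    have h1 : (b*sa)^2 < (a*sb)^2 := by
      rw [mul_pow, mul_pow, hsa2, hsb2]; nlinarith
    exact lt_of_pow_lt_pow_left₀ 2 (by positivity) h1
  nlinarith

theorem fseq_diff_strictAnti :
    StrictAnti (fun t : ℕ => fseq (t + 1) - fseq t) := by
  apply strictAnti_nat_of_succ_lt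
  intro t
  simp only [diff_eq]
  have hb : 0 < 1 - alphaSeq (t+1) := by linarith [alpha_lt_one (t+1)]
  have hlt : 1 - alphaSeq (t+1) < 1 - alphaSeq t := by linarith [alpha_lt_succ t]
  linarith [D_mono hb hlt]
end

section
/- With α_0 = 0, α_{t+1} = α_t + (1/2)(√(4α_t² − 8α_t + 5) − 1), and f_t = 1/(1 − α_t), the recurrence relation α_{t+1} = (1 − α_{t+1})(1 − α_t)/(α_{t+1} − α_t) holds for all t ≥ 0; equivalently α_{t+1} = 1/(f_{t+1} − f_t). -/
lemma alphaSeq_bounds : ∀ t : ℕ, 0 ≤ alphaSeq t ∧ alphaSeq t < 1 := by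
  intro t
  induction t with
  | zero => simp [alphaSeq]
  | succ n ih =>
    obtain ⟨h0, h1⟩ := ih
    set a := alphaSeq n with ha
    have hnn : (0:ℝ) ≤ 4 * a ^ 2 - 8 * a + 5 := by nlinarith
    set s := Real.sqrt (4 * a ^ 2 - 8 * a + 5) with hs
    have hs2 : s ^ 2 = 4 * a ^ 2 - 8 * a + 5 := Real.sq_sqrt hnn
    have hsnn : 0 ≤ s := Real.sqrt_nonneg _
    have hs1 : 1 < s := by nlinarith
    have hslt : s < 3 - 2 * a := by nlinarith
    have : alphaSeq (n + 1) = a + (1/2) * (s - 1) := rfl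
    constructor <;> rw [this] <;> nlinarith

theorem alphaSeq_recurrence_relation :
    ∀ t : ℕ,
      alphaSeq (t + 1) =
        (1 - alphaSeq (t + 1)) * (1 - alphaSeq t) / (alphaSeq (t + 1) - alphaSeq t) ∧
      alphaSeq (t + 1) = 1 / (fseq (t + 1) - fseq t) := by
  intro t
  obtain ⟨h0, h1⟩ := alphaSeq_bounds t
  obtain ⟨h0', h1'⟩ := alphaSeq_bounds (t + 1)
  set a := alphaSeq t with ha
  have hnn : (0:ℝ) ≤ 4 * a ^ 2 - 8 * a + 5 := by nlinarith
  set s := Real.sqrt (4 * a ^ 2 - 8 * a + 5) with hs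
  have hs2 : s ^ 2 = 4 * a ^ 2 - 8 * a + 5 := Real.sq_sqrt hnn
  have hsnn : 0 ≤ s := Real.sqrt_nonneg _
  have hs1 : 1 < s := by nlinarith
  have hb : alphaSeq (t + 1) = a + (1/2) * (s - 1) := rfl
  set b := alphaSeq (t + 1) with hbb
  have hd : 0 < b - a := by rw [hb]; nlinarith
  have hkey : b * (b - a) = (1 - b) * (1 - a) := by rw [hb]; nlinarith
  have h1a : (1:ℝ) - a ≠ 0 := by linarith
  have h1b : (1:ℝ) - b ≠ 0 := by linarith
  constructor
  · field_simp
    linarith [hkey]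
  · rw [fseq, fseq, ← ha, ← hbb]
    rw [div_sub_div _ _ h1b h1a]
    rw [one_div_div]
    rw [show (1:ℝ) * (1 - a) - (1 - b) * 1 = b - a by ring]
    field_simp
    linarith [hkey]
end

section
/- Define the set function f on subsets of [n] by f(S_t) = 1/(1 − α_t), where S_t ⊆ [n] is the set whose characteristic vector encodes the integer t in binary (action i has weight 2^{i−1}), and (α_t) is defined by α_0 = 0, α_{t+1} = α_t + (1/2)(√(4α_t² − 8α_t + 5) − 1). Then f is monotone and submodular: for every S ⊆ T ⊆ [n] and i ∉ T, f(S ∪ {i}) − f(S) ≥ f(T ∪ {i}) − f(T). -/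
/-- Binary encoding of a subset of `Fin n`: action `i` (zero-based) has weight `2^i`. -/
def enc {n : ℕ} (S : Finset (Fin n)) : ℕ := ∑ i ∈ S, 2 ^ (i : ℕ)

/-- The equal-revenue reward function: `f(S_t) = 1/(1 - α_t)`. -/
noncomputable def fSet {n : ℕ} (S : Finset (Fin n)) : ℝ := 1 / (1 - alphaSeq (enc S))

open Finset

section Increments

variable {α : Type*} [AddCommGroup α] [PartialOrder α] [IsOrderedAddMonoid α] {F : ℕ → α}

theorem antitone_sub_add_of_antitone_sub_succ (hF : Antitone fun t => F (t + 1) - F t) (k : ℕ) :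
    Antitone fun t => F (t + k) - F t := by
  intro s u hsu
  have telescope (t : ℕ) : F (t + k) - F t = ∑ j ∈ range k, (F (t + j + 1) - F (t + j)) :=
    (sum_range_sub (fun j => F (t + j)) k).symm
  simp only [telescope]
  exact sum_le_sum fun j _ => hF (by omega)

theorem sub_sum_insert_le_sub_sum_insert {ι : Type*} [DecidableEq ι]
    (hF : Antitone fun t => F (t + 1) - F t) (w : ι → ℕ) {S T : Finset ι} {i : ι}
    (hST : S ⊆ T) (hiT : i ∉ T) :
    F (∑ j ∈ insert i T, w j) - F (∑ j ∈ T, w j) ≤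
      F (∑ j ∈ insert i S, w j) - F (∑ j ∈ S, w j) := by
  rw [sum_insert hiT, sum_insert fun hiS => hiT (hST hiS), add_comm (w i), add_comm (w i)]
  exact antitone_sub_add_of_antitone_sub_succ hF (w i) (sum_le_sum_of_subset hST)

end Increments

lemma half_le_sqrt_sq_add_quarter (b : ℝ) : 1 / 2 ≤ √(b ^ 2 + 1 / 4) :=
  (Real.le_sqrt (by norm_num) (by positivity)).2 (by nlinarith [sq_nonneg b])

lemma one_sub_alphaSeq_succ (t : ℕ) :
    1 - alphaSeq (t + 1) = (1 - alphaSeq t) /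
      ((1 - alphaSeq t) + 1 / 2 + √((1 - alphaSeq t) ^ 2 + 1 / 4)) := by
  set b := 1 - alphaSeq t
  set s := √(b ^ 2 + 1 / 4)
  have hs : s ^ 2 = b ^ 2 + 1 / 4 := Real.sq_sqrt (by positivity)
  have hbs : -b ≤ s := (neg_le_abs b).trans (Real.abs_le_sqrt (by linarith))
  have hsqrt : √(4 * alphaSeq t ^ 2 - 8 * alphaSeq t + 5) = 2 * s := by
    rw [show 4 * alphaSeq t ^ 2 - 8 * alphaSeq t + 5 = 2 ^ 2 * (b ^ 2 + 1 / 4) by ring,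
      Real.sqrt_mul (by positivity), Real.sqrt_sq (by norm_num)]
  rw [alphaSeq, hsqrt, eq_div_iff (by linarith)]
  linear_combination -hs

lemma one_sub_alphaSeq_pos (t : ℕ) : 0 < 1 - alphaSeq t := by
  induction t with
  | zero => simp [alphaSeq]
  | succ t ih =>
    rw [one_sub_alphaSeq_succ]
    have := half_le_sqrt_sq_add_quarter (1 - alphaSeq t)
    positivity

lemma one_sub_alphaSeq_antitone : Antitone fun t => 1 - alphaSeq t := by
  refine antitone_nat_of_succ_le fun t => ?_
  have hb := one_sub_alphaSeq_pos t
  rw [one_sub_alphaSeq_succ]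
  exact div_le_self hb.le (by linarith [half_le_sqrt_sq_add_quarter (1 - alphaSeq t)])

lemma monotoneOn_div_sqrt_sq_add_quarter_add_half :
    MonotoneOn (fun b : ℝ => b / (√(b ^ 2 + 1 / 4) + 1 / 2)) (Set.Ici 0) := by
  intro x hx y hy hxy
  simp only [Set.mem_Ici] at hx hy
  have hx' := half_le_sqrt_sq_add_quarter x
  have hy' := half_le_sqrt_sq_add_quarter y
  have cross : x * √(y ^ 2 + 1 / 4) ≤ y * √(x ^ 2 + 1 / 4) := by
    refine (pow_le_pow_iff_left₀ (by positivity) (by positivity) two_ne_zero).1 ?_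
    rw [mul_pow, mul_pow, Real.sq_sqrt (by positivity), Real.sq_sqrt (by positivity)]
    nlinarith [mul_le_mul hxy hxy hx hy]
  rw [div_le_div_iff₀ (by linarith) (by linarith)]
  linarith

noncomputable def fSeq (t : ℕ) : ℝ := 1 / (1 - alphaSeq t)

lemma fSeq_succ_sub (t : ℕ) :
    fSeq (t + 1) - fSeq t =
      1 + (1 - alphaSeq t) / (√((1 - alphaSeq t) ^ 2 + 1 / 4) + 1 / 2) := by
  have hb := one_sub_alphaSeq_pos t
  rw [fSeq, fSeq, one_sub_alphaSeq_succ]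
  generalize 1 - alphaSeq t = b at hb ⊢
  set s := √(b ^ 2 + 1 / 4)
  have hs : s ^ 2 = b ^ 2 + 1 / 4 := Real.sq_sqrt (by positivity)
  have hs' : 1 / 2 ≤ s := half_le_sqrt_sq_add_quarter b
  field_simp
  linear_combination 4 * hs

lemma antitone_fSeq_succ_sub : Antitone fun t => fSeq (t + 1) - fSeq t := by
  intro s u hsu
  simp only [fSeq_succ_sub]
  gcongr 1 + ?_
  exact monotoneOn_div_sqrt_sq_add_quarter_add_half (one_sub_alphaSeq_pos u).le
    (one_sub_alphaSeq_pos s).le (one_sub_alphaSeq_antitone hsu)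

lemma monotone_fSeq : Monotone fSeq := by
  refine monotone_nat_of_le_succ fun t => ?_
  have hb := one_sub_alphaSeq_pos t
  rw [← sub_nonneg, fSeq_succ_sub]
  generalize 1 - alphaSeq t = b at hb ⊢
  positivity

theorem fSet_monotone_submodular (n : ℕ) :
    (∀ S T : Finset (Fin n), S ⊆ T → fSet S ≤ fSet T) ∧
    (∀ S T : Finset (Fin n), ∀ i : Fin n, S ⊆ T → i ∉ T →
      fSet (insert i S) - fSet S ≥ fSet (insert i T) - fSet T) :=
  ⟨fun _ _ hST => monotone_fSeq (sum_le_sum_of_subset hST),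
    fun _ _ _ hST hiT => sub_sum_insert_le_sub_sum_insert antitone_fSeq_succ_sub _ hST hiT⟩
end

section
/- Let f: 2^{[n]} → ℝ be a set function such that f(S_t) = F(t), where S_t encodes t in binary via weights 2^{i−1}, and F: ℕ → ℝ has strictly decreasing differences F(t+1) − F(t). Then f is submodular. More strongly, for any two sets S_t, S_{t'} with t < t' and any i with i ∉ S_t and i ∉ S_{t'}, we have f(S_t ∪ {i}) − f(S_t) ≥ f(S_{t'} ∪ {i}) − f(S_{t'}). -/
lemma diff_antitone (F : ℕ → ℝ)
    (hF : ∀ t : ℕ, F (t + 2) - F (t + 1) < F (t + 1) - F t) :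
    ∀ a b : ℕ, a ≤ b → F (b + 1) - F b ≤ F (a + 1) - F a := by
  intro a b hab
  induction b, hab using Nat.le_induction with
  | base => exact le_refl _
  | succ m hm ih => exact le_trans (le_of_lt (hF m)) ih

lemma step_antitone (F : ℕ → ℝ)
    (hF : ∀ t : ℕ, F (t + 2) - F (t + 1) < F (t + 1) - F t) :
    ∀ k a b : ℕ, a ≤ b → F (b + k) - F b ≤ F (a + k) - F a := by
  intro k
  induction k with
  | zero => intro a b _; simp
  | succ k ih =>
    intro a b hab
    have h1 := diff_antitone F hF (a + k) (b + k) (by omega)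
    have h2 := ih a b hab
    calc F (b + (k + 1)) - F b = (F (b + k + 1) - F (b + k)) + (F (b + k) - F b) := by
          rw [show b + (k + 1) = b + k + 1 by ring]; ring
      _ ≤ (F (a + k + 1) - F (a + k)) + (F (a + k) - F a) := add_le_add h1 h2
      _ = F (a + (k + 1)) - F a := by rw [show a + (k + 1) = a + k + 1 by ring]; ring

theorem submodular_of_decreasing_differences (n : ℕ) (F : ℕ → ℝ)
    (hF : ∀ t : ℕ, F (t + 2) - F (t + 1) < F (t + 1) - F t) :
    (∀ S T : Finset (Fin n), ∀ i : Fin n, S ⊆ T → i ∉ T →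
      F (enc (insert i S)) - F (enc S) ≥ F (enc (insert i T)) - F (enc T)) ∧
    (∀ S T : Finset (Fin n), ∀ i : Fin n, enc S < enc T → i ∉ S → i ∉ T →
      F (enc (insert i S)) - F (enc S) ≥ F (enc (insert i T)) - F (enc T)) := by
  have key : ∀ S T : Finset (Fin n), ∀ i : Fin n, enc S ≤ enc T → i ∉ S → i ∉ T →
      F (enc (insert i S)) - F (enc S) ≥ F (enc (insert i T)) - F (enc T) := by
    intro S T i hle hiS hiT
    have hS : enc (insert i S) = enc S + 2 ^ (i : ℕ) := by
      rw [enc, Finset.sum_insert hiS, enc]; ring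
    have hT : enc (insert i T) = enc T + 2 ^ (i : ℕ) := by
      rw [enc, Finset.sum_insert hiT, enc]; ring
    rw [hS, hT]
    exact step_antitone F hF (2 ^ (i : ℕ)) (enc S) (enc T) hle
  constructor
  · intro S T i hST hiT
    exact key S T i (Finset.sum_le_sum_of_subset hST) (fun h => hiT (hST h)) hiT
  · intro S T i hlt hiS hiT
    exact key S T i (le_of_lt hlt) hiS hiT
end

section
/- For all x with (√5−1)/2 ≤ x < 1, (1−x)³ < (1/2)(√(4x² − 8x + 5) − 1) < (1−x)^{3/2}. -/
theorem increment_bounds_pointwise (x : ℝ) (hx : (Real.sqrt 5 - 1) / 2 ≤ x) (hx1 : x < 1) :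
    (1 - x) ^ 3 < (1/2) * (Real.sqrt (4 * x ^ 2 - 8 * x + 5) - 1) ∧
    (1/2) * (Real.sqrt (4 * x ^ 2 - 8 * x + 5) - 1) < (1 - x) ^ ((3 : ℝ) / 2) := by
  set u : ℝ := 1 - x with hu_def
  have hu0 : 0 < u := by linarith
  have hsqrt5 : (11:ℝ)/5 < Real.sqrt 5 := by
    nlinarith [Real.sq_sqrt (by norm_num : (5:ℝ) ≥ 0), Real.sqrt_nonneg 5]
  have hu4 : u < 2/5 := by rw [hu_def]; linarith
  have hq : 4 * x ^ 2 - 8 * x + 5 = 4 * u ^ 2 + 1 := by rw [hu_def]; ring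
  set s : ℝ := Real.sqrt (4 * x ^ 2 - 8 * x + 5) with hs_def
  have hs0 : 0 ≤ s := Real.sqrt_nonneg _
  have hs2 : s ^ 2 = 4 * u ^ 2 + 1 := by
    rw [hs_def, Real.sq_sqrt (by nlinarith)]; exact hq
  clear_value s
  have hu1 : u < 1 := by linarith
  clear_value u
  constructor
  · -- lower bound: need s > 2*u^3 + 1
    have hu3 : u ^ 3 < 1 := pow_lt_one₀ hu0.le hu1 (by norm_num)
    have hkey : u ^ 4 < u := by nlinarith
    have h1 : (2 * u ^ 3 + 1) ^ 2 < s ^ 2 := by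
      nlinarith [mul_pos (mul_pos hu0 hu0) (show (0:ℝ) < 1 - u - u^4 by nlinarith)]
    have h2 : 2 * u ^ 3 + 1 < s := by nlinarith [pow_pos hu0 3]
    linarith
  · -- upper bound
    set t : ℝ := Real.sqrt u with ht_def
    have ht0 : 0 < t := Real.sqrt_pos.mpr hu0
    have ht2 : t ^ 2 = u := Real.sq_sqrt hu0.le
    clear_value t
    have ht1 : t < 1 := by nlinarith
    have hrw : u ^ ((3:ℝ)/2) = t ^ 3 := by
      rw [ht_def, Real.sqrt_eq_rpow, ← Real.rpow_natCast (u ^ ((1:ℝ)/2)) 3,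
        ← Real.rpow_mul hu0.le]
      norm_num
    rw [hrw]
    have h1 : s ^ 2 < (2 * t ^ 3 + 1) ^ 2 := by
      nlinarith [mul_pos (pow_pos ht0 3)
        (show (0:ℝ) < t^3 - t + 1 by nlinarith [pow_pos ht0 3])]
    have h2 : s < 2 * t ^ 3 + 1 := by nlinarith [pow_pos ht0 3]
    linarith
end

section
/- In the equal-revenue instance with α_t as defined, for every t ∈ [2^n − 1], 1 − α_t ≥ 2^{−6n}. -/
lemma alphaSeq_key : ∀ t : ℕ, 1 ≤ t →
    (2 * (t:ℝ) + 1) * (1 - alphaSeq t) ≥ 1 ∧ 1 - alphaSeq t ≤ 1/2 := by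
  intro t
  induction t with
  | zero => intro h; omega
  | succ t ih =>
    intro _
    rcases Nat.eq_zero_or_pos t with rfl | ht
    · -- base case t = 1
      have h5 : Real.sqrt 5 ^ 2 = 5 := Real.sq_sqrt (by norm_num)
      have h5n : (0:ℝ) ≤ Real.sqrt 5 := Real.sqrt_nonneg 5
      have : alphaSeq 1 = (1/2) * (Real.sqrt 5 - 1) := by
        show alphaSeq 0 + _ = _
        simp [alphaSeq]
      rw [this]
      constructor
      · push_cast; nlinarith
      · nlinarith
    · obtain ⟨h1, h2⟩ := ih ht
      set a := alphaSeq t with ha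
      set β := 1 - a with hβ
      have hs2 : Real.sqrt (4 * a^2 - 8 * a + 5) ^ 2 = 4 * β^2 + 1 := by
        rw [Real.sq_sqrt (by nlinarith [sq_nonneg (a - 1)])]
        rw [hβ]; ring
      set s := Real.sqrt (4 * a^2 - 8 * a + 5) with hs
      have hsn : 0 ≤ s := Real.sqrt_nonneg _
      have hs1 : 1 ≤ s := by nlinarith [sq_nonneg β]
      have hsle : s ≤ 1 + 2 * β^2 := by nlinarith [sq_nonneg (s - (1 + 2*β^2)), sq_nonneg β]
      have hstep : alphaSeq (t+1) = a + (1/2) * (s - 1) := rfl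
      have hβ' : 1 - alphaSeq (t+1) = β - (1/2) * (s - 1) := by rw [hstep]; ring
      have htpos : (1:ℝ) ≤ (t:ℝ) := by exact_mod_cast ht
      have hβpos : 0 < β := by nlinarith
      constructor
      · rw [hβ']
        push_cast
        have hkey : ((2*(t:ℝ)+1) * β - 1) * ((2*(t:ℝ)+1) * (1 - β) - 1) ≥ 0 := by
          apply mul_nonneg
          · linarith
          · nlinarith
        nlinarith
      · rw [hβ']; nlinarith

theorem alphaSeq_dist_from_one (n : ℕ) (hn : 2 ≤ n) :
    ∀ t : ℕ, t ≤ 2 ^ n - 1 → 1 - alphaSeq t ≥ 1 / 2 ^ (6 * n) := by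
  intro t ht
  have hpow : (0:ℝ) < 2 ^ (6 * n) := by positivity
  rcases Nat.eq_zero_or_pos t with rfl | htpos
  · have : alphaSeq 0 = 0 := rfl
    rw [this]
    have : (1:ℝ) / 2 ^ (6*n) ≤ 1 := by
      rw [div_le_one hpow]
      exact one_le_pow₀ (by norm_num)
    linarith
  · obtain ⟨h1, h2⟩ := alphaSeq_key t htpos
    -- 2t+1 ≤ 2^(n+1) - 1 ≤ 2^(6n)
    have hnat : 2 * t + 1 ≤ 2 ^ (6 * n) := by
      have h3 : 2 * t + 1 ≤ 2 ^ (n+1) - 1 := by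
        have : 1 ≤ 2 ^ n := Nat.one_le_two_pow
        omega
      have h4 : 2 ^ (n+1) ≤ 2 ^ (6*n) := Nat.pow_le_pow_right (by norm_num) (by omega)
      omega
    have hcast : (2 * (t:ℝ) + 1) ≤ 2 ^ (6 * n) := by
      exact_mod_cast hnat
    have hc : (0:ℝ) < 2 * (t:ℝ) + 1 := by positivity
    have hβ : 1 / (2 * (t:ℝ) + 1) ≤ 1 - alphaSeq t := by
      rw [div_le_iff₀ hc]; linarith [h1]
    have : (1:ℝ) / 2 ^ (6*n) ≤ 1 / (2 * (t:ℝ) + 1) :=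
      one_div_le_one_div_of_le hc hcast
    linarith
end

section
/- Equal-revenue property of the submodular-f construction: let α_t and f as above (f(S_t) = 1/(1−α_t), c_i = 2^{i−1} so c(S_t) = t). Then for every t ∈ {0,…,2^n − 2}, the contract α_{t+1} equals (c(S_{t+1}) − c(S_t))/(f(S_{t+1}) − f(S_t)), and the principal's utility at each critical value is exactly 1: (1 − α_t)·f(S_t) = 1 for all t ≥ 1. -/
/-- Additive costs with `c_i = 2^i` (zero-based), so `c(S_t) = t`. -/
noncomputable def cSet {n : ℕ} (S : Finset (Fin n)) : ℝ := ∑ i ∈ S, (2 : ℝ) ^ (i : ℕ)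

/-!
The step `a ↦ b` of the recurrence picks the root `b > a` of `b² - 2ab + a + b - 1 = 0`,
i.e. of `(1 - a)(1 - b) = b (b - a)`. Dividing by `b (1 - a)(1 - b)` this says exactly
`1/(1 - b) - 1/(1 - a) = 1/b`: the reward increment is `1/α_{t+1}`, while the cost increment
`c(S_{t+1}) - c(S_t)` is `1` because `c(S) = enc S`. The utility identity only needs `α_t < 1`,
which the step preserves.
-/

open Real

noncomputable def equalRevenueStep (a : ℝ) : ℝ := a + (1/2) * (√(4 * a^2 - 8 * a + 5) - 1)

lemma alphaSeq_succ (t : ℕ) : alphaSeq (t + 1) = equalRevenueStep (alphaSeq t) := rfl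

lemma equalRevenueStep_lt_one {a : ℝ} (ha : a < 1) : equalRevenueStep a < 1 := by
  have : √(4 * a^2 - 8 * a + 5) < 3 - 2 * a :=
    (sqrt_lt' (by linarith)).2 (by nlinarith)
  unfold equalRevenueStep
  linarith

lemma lt_equalRevenueStep {a : ℝ} (ha : a < 1) : a < equalRevenueStep a := by
  have : 1 < √(4 * a^2 - 8 * a + 5) :=
    (lt_sqrt zero_le_one).2 (by nlinarith)
  unfold equalRevenueStep
  linarith

lemma one_sub_mul_one_sub_equalRevenueStep (a : ℝ) :
    (1 - a) * (1 - equalRevenueStep a) = equalRevenueStep a * (equalRevenueStep a - a) := by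
  have hsq : √(4 * a^2 - 8 * a + 5) ^ 2 = 4 * a^2 - 8 * a + 5 :=
    sq_sqrt (by nlinarith [sq_nonneg (a - 1)])
  unfold equalRevenueStep
  linear_combination (-1/4) * hsq

lemma alphaSeq_lt_one (t : ℕ) : alphaSeq t < 1 := by
  induction t with
  | zero => simp [alphaSeq]
  | succ t ih => exact equalRevenueStep_lt_one ih

lemma alphaSeq_strictMono : StrictMono alphaSeq :=
  strictMono_nat_of_lt_succ fun t => lt_equalRevenueStep (alphaSeq_lt_one t)

lemma alphaSeq_succ_pos (t : ℕ) : 0 < alphaSeq (t + 1) :=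
  alphaSeq_strictMono (Nat.succ_pos t)

lemma one_div_one_sub_alphaSeq_succ_sub (t : ℕ) :
    1 / (1 - alphaSeq (t + 1)) - 1 / (1 - alphaSeq t) = 1 / alphaSeq (t + 1) := by
  have ha := sub_ne_zero.2 (alphaSeq_lt_one t).ne'
  have hb := sub_ne_zero.2 (alphaSeq_lt_one (t + 1)).ne'
  have key := one_sub_mul_one_sub_equalRevenueStep (alphaSeq t)
  rw [← alphaSeq_succ] at key
  field_simp [(alphaSeq_succ_pos t).ne']
  linear_combination -key

lemma cSet_eq_enc {n : ℕ} (S : Finset (Fin n)) : cSet S = enc S := by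
  simp [cSet, enc]

theorem equal_revenue_property (n : ℕ) :
    (∀ S T : Finset (Fin n), enc T = enc S + 1 →
      alphaSeq (enc T) = (cSet T - cSet S) / (fSet T - fSet S)) ∧
    (∀ S : Finset (Fin n), S.Nonempty → (1 - alphaSeq (enc S)) * fSet S = 1) := by
  refine ⟨fun S T hST => ?_, fun S _ => ?_⟩
  · rw [cSet_eq_enc, cSet_eq_enc, fSet, fSet, hST, one_div_one_sub_alphaSeq_succ_sub,
      Nat.cast_succ, add_sub_cancel_left, one_div_one_div]
  · exact mul_one_div_cancel (sub_ne_zero.2 (alphaSeq_lt_one _).ne')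
end

section
/- Sparse demand counting bound: fix a price vector p ∈ ℝ₊ⁿ and suppose for each action i ∈ [n] there is an 'ambiguity interval' [l_i, r_i] ⊆ {0,…,2^n−1} with r_i − l_i ≤ 2^i, such that every set S_t in a collection D ⊆ 2^{[n]} (indexed by t = Σ_{i∈S_t} 2^{i−1}) satisfies: if t > r_i then i ∉ S_t, and if t < l_i then i ∈ S_t. Then |D| ≤ 2(n+1)(n+2) = O(n²). -/
open Finset

namespace SparseDemand

variable {n : ℕ}

lemma enc_eq_sum_map (S : Finset (Fin n)) : enc S = ∑ j ∈ S.map Fin.valEmbedding, 2 ^ j := by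
  rw [enc, sum_map]
  rfl

lemma enc_injective : Function.Injective (enc : Finset (Fin n) → ℕ) := by
  intro S S' h
  rw [enc_eq_sum_map, enc_eq_sum_map] at h
  exact map_injective _ (geomSum_injective le_rfl h)

def highPart (k : ℕ) (S : Finset (Fin n)) : ℕ := ∑ i ∈ S with k ≤ i.val, 2 ^ i.val

def lowPart (k : ℕ) (S : Finset (Fin n)) : ℕ := ∑ i ∈ S with i.val < k, 2 ^ i.val

lemma highPart_add_lowPart (k : ℕ) (S : Finset (Fin n)) :
    highPart k S + lowPart k S = enc S := by
  simp only [highPart, lowPart, ← not_le]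
  exact sum_filter_add_sum_filter_not S _ _

lemma two_pow_dvd_highPart (k : ℕ) (S : Finset (Fin n)) : 2 ^ k ∣ highPart k S :=
  dvd_sum fun _ hi => pow_dvd_pow 2 (mem_filter.mp hi).2

lemma highPart_of_le {k : ℕ} (hk : n ≤ k) (S : Finset (Fin n)) : highPart k S = 0 := by
  rw [highPart, filter_false_of_mem fun i _ => by have := i.isLt; omega, sum_empty]

lemma lowPart_lt (k : ℕ) (S : Finset (Fin n)) : lowPart k S < 2 ^ k := by
  have hmap : lowPart k S = ∑ j ∈ {i ∈ S | i.val < k}.map Fin.valEmbedding, 2 ^ j := by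
    rw [sum_map]
    rfl
  rw [hmap]
  exact Nat.geomSum_lt le_rfl fun j hj => by
    obtain ⟨i, hi, rfl⟩ := mem_map.mp hj
    exact (mem_filter.mp hi).2

def LowBitsByThreshold (l : Fin n → ℕ) (k : ℕ) (S : Finset (Fin n)) : Prop :=
  ∀ i : Fin n, i.val < k → (i ∈ S ↔ enc S < l i)

lemma lowPart_antitone {l : Fin n → ℕ} {k : ℕ} {S S' : Finset (Fin n)}
    (hS : LowBitsByThreshold l k S) (hS' : LowBitsByThreshold l k S') (hle : enc S ≤ enc S') :
    lowPart k S' ≤ lowPart k S := by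
  refine sum_le_sum_of_subset fun i hi => ?_
  obtain ⟨hiS', hik⟩ := mem_filter.mp hi
  exact mem_filter.mpr ⟨(hS i hik).mpr (hle.trans_lt ((hS' i hik).mp hiS')), hik⟩

lemma highPart_lt_highPart {l : Fin n → ℕ} {k : ℕ} {S S' : Finset (Fin n)}
    (hS : LowBitsByThreshold l k S) (hS' : LowBitsByThreshold l k S') (hlt : enc S < enc S') :
    highPart k S < highPart k S' := by
  have := lowPart_antitone hS hS' hlt.le
  have := highPart_add_lowPart k S
  have := highPart_add_lowPart k S'
  omega

lemma highPart_injOn (l : Fin n → ℕ) (k : ℕ) :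
    Set.InjOn (highPart k) {S : Finset (Fin n) | LowBitsByThreshold l k S} := by
  intro S hS S' hS' h
  refine enc_injective (le_antisymm ?_ ?_) <;> by_contra! hlt
  · exact (highPart_lt_highPart hS' hS hlt).ne' h
  · exact (highPart_lt_highPart hS hS' hlt).ne h

lemma div_mem_Icc_of_dvd {d h e l : ℕ} (hd : d ∣ h) (he : e < d) (hl : l ≤ h + e)
    (hu : h ≤ l + 2 * d) : h / d ∈ Icc (l / d) (l / d + 2) := by
  obtain ⟨q, rfl⟩ := hd
  have hd0 : 0 < d := by omega
  rw [Nat.mul_div_cancel_left q hd0, mem_Icc]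
  constructor
  · exact Nat.lt_succ_iff.mp ((Nat.div_lt_iff_lt_mul hd0).mpr (by nlinarith))
  · calc q = d * q / d := (Nat.mul_div_cancel_left q hd0).symm
      _ ≤ (l + 2 * d) / d := Nat.div_le_div_right hu
      _ = l / d + 2 := by rw [mul_comm, Nat.add_mul_div_left _ _ hd0]

/-- The least action whose ambiguity interval `[l i, r i]` contains `t`, or `n` if there is none. -/
def firstAmbiguous (l r : Fin n → ℕ) (t : ℕ) : ℕ :=
  Nat.find (⟨n, Or.inl rfl⟩ : ∃ k, k = n ∨ ∃ i : Fin n, i.val = k ∧ l i ≤ t ∧ t ≤ r i)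

section firstAmbiguous

variable {l r : Fin n → ℕ} {t : ℕ}

lemma firstAmbiguous_le : firstAmbiguous l r t ≤ n :=
  Nat.find_min' _ (Or.inl rfl)

lemma not_ambiguous_of_lt_firstAmbiguous {i : Fin n} (hi : i.val < firstAmbiguous l r t) :
    ¬(l i ≤ t ∧ t ≤ r i) :=
  fun hamb => Nat.find_min _ hi (Or.inr ⟨i, rfl, hamb⟩)

lemma ambiguous_firstAmbiguous (h : firstAmbiguous l r t < n) :
    l ⟨_, h⟩ ≤ t ∧ t ≤ r ⟨_, h⟩ := by
  obtain h' | ⟨i, hi, hamb⟩ :=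
    Nat.find_spec (⟨n, Or.inl rfl⟩ : ∃ k, k = n ∨ ∃ i : Fin n, i.val = k ∧ l i ≤ t ∧ t ≤ r i)
  · exact absurd h' h.ne
  · obtain rfl : i = ⟨_, h⟩ := Fin.ext hi
    exact hamb

end firstAmbiguous

lemma lowBitsByThreshold_firstAmbiguous {l r : Fin n → ℕ} {S : Finset (Fin n)}
    (hhi : ∀ i, enc S > r i → i ∉ S) (hlo : ∀ i, enc S < l i → i ∈ S) :
    LowBitsByThreshold l (firstAmbiguous l r (enc S)) S := by
  intro i hi
  refine ⟨fun hiS => ?_, hlo i⟩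
  by_contra! hle
  exact not_ambiguous_of_lt_firstAmbiguous hi ⟨hle, not_lt.mp fun hr => hhi i hr hiS⟩

lemma card_filter_firstAmbiguous_eq_le_three {l r : Fin n → ℕ}
    (hwidth : ∀ i : Fin n, r i ≤ l i + 2 ^ (i.val + 1)) {D : Finset (Finset (Fin n))}
    (hlow : ∀ S ∈ D, LowBitsByThreshold l (firstAmbiguous l r (enc S)) S) (k : ℕ) :
    #{S ∈ D | firstAmbiguous l r (enc S) = k} ≤ 3 := by
  obtain ⟨q, hq⟩ : ∃ q, ∀ S ∈ D, firstAmbiguous l r (enc S) = k →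
      highPart k S / 2 ^ k ∈ Icc q (q + 2) := by
    by_cases hk : k < n
    · refine ⟨l ⟨k, hk⟩ / 2 ^ k, fun S _ hSk => ?_⟩
      subst hSk
      obtain ⟨hl, hr⟩ := ambiguous_firstAmbiguous hk
      have hsplit := highPart_add_lowPart (firstAmbiguous l r (enc S)) S
      have hrl := hwidth ⟨_, hk⟩
      simp only [pow_succ] at hrl
      exact div_mem_Icc_of_dvd (two_pow_dvd_highPart _ S) (lowPart_lt _ S) (by omega) (by omega)
    · exact ⟨0, fun S _ _ => by simp [highPart_of_le (not_lt.mp hk)]⟩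
  calc #{S ∈ D | firstAmbiguous l r (enc S) = k} ≤ #(Icc q (q + 2)) := by
        refine card_le_card_of_injOn (fun S => highPart k S / 2 ^ k)
          (fun S hS => hq S (mem_filter.mp hS).1 (mem_filter.mp hS).2) ?_
        intro S hS S' hS' h
        obtain ⟨hSD, rfl⟩ := mem_filter.mp hS
        obtain ⟨hSD', hk⟩ := mem_filter.mp hS'
        refine highPart_injOn l _ (hlow S hSD) (hk ▸ hlow S' hSD') ?_
        exact (Nat.div_left_inj (two_pow_dvd_highPart _ S) (two_pow_dvd_highPart _ S')).mp h
    _ = 3 := by rw [Nat.card_Icc]; omega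

theorem card_le_three_mul_succ {l r : Fin n → ℕ}
    (hwidth : ∀ i : Fin n, r i ≤ l i + 2 ^ (i.val + 1)) (D : Finset (Finset (Fin n)))
    (hhi : ∀ S ∈ D, ∀ i : Fin n, enc S > r i → i ∉ S)
    (hlo : ∀ S ∈ D, ∀ i : Fin n, enc S < l i → i ∈ S) :
    #D ≤ 3 * (n + 1) := by
  have hlow : ∀ S ∈ D, LowBitsByThreshold l (firstAmbiguous l r (enc S)) S :=
    fun S hS => lowBitsByThreshold_firstAmbiguous (hhi S hS) (hlo S hS)
  calc #D ≤ 3 * #(range (n + 1)) :=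
        card_le_mul_card_image_of_maps_to
          (fun S _ => mem_range_succ_iff.mpr firstAmbiguous_le) 3
          fun k _ => card_filter_firstAmbiguous_eq_le_three hwidth hlow k
    _ = 3 * (n + 1) := by rw [card_range]

end SparseDemand

theorem sparse_demand_counting (n : ℕ) (l r : Fin n → ℕ)
    (hwidth : ∀ i : Fin n, r i - l i ≤ 2 ^ ((i : ℕ) + 1))
    (D : Finset (Finset (Fin n)))
    (hhi : ∀ S ∈ D, ∀ i : Fin n, enc S > r i → i ∉ S)
    (hlo : ∀ S ∈ D, ∀ i : Fin n, enc S < l i → i ∈ S) :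
    D.card ≤ 2 * (n + 1) * (n + 2) := by
  have := SparseDemand.card_le_three_mul_succ (fun i => by have := hwidth i; omega) D hhi hlo
  nlinarith
end
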